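/- arXiv:2011.11037 — 2 statements merged into one kernel-verified Lean document; each statement's English description precedes it below -/
import Mathlib

section
/- For every continuous function $f$ on $[a,b]$ and every $\varepsilon>0$, there exists $n$ and a uniform fuzzy partition $A_1,\ldots,A_n$ of $[a,b]$ such that the inverse F-transform $f^F_n$ satisfies $|f(x)-f^F_n(x)|<\varepsilon$ for all $x\in[a,b]$. -/
/-!
The triangular functions of mesh `h` form a uniform fuzzy partition. Each component `F_i` is the
mean of `f` against a nonnegative weight supported in `(x_i - h, x_i + h)`, so it lies within the
oscillation of `f` on that interval. Since the `A_i(x)` sum to `1`, the error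
`f x - f^F_n x = ∑ (f x - F_i) A_i(x)` is a convex combination of such deviations over the `i`
with `|x - x_i| < h`, and uniform continuity makes them all small once `2h` is below a modulus
of continuity of `f`.
-/

open MeasureTheory intervalIntegral Real Set Finset

noncomputable section

/-- Nodes of a uniform fuzzy partition of `[a,b]` with `n` basic functions:
`x i = a + h*(i-1)` for `1 ≤ i ≤ n`, with the conventions `x 0 = a`, `x (n+1) = b`. -/
def ufpNode (a b : ℝ) (n i : ℕ) : ℝ :=
  if i = 0 then a else if i = n + 1 then b
  else a + ((b - a) / ((n : ℝ) - 1)) * ((i : ℝ) - 1)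

/-- `A 1, …, A n` is a uniform fuzzy partition of `[a,b]`. -/
def IsUFP (a b : ℝ) (n : ℕ) (A : ℕ → ℝ → ℝ) : Prop :=
  2 ≤ n ∧ a < b ∧
  (∀ i ∈ Finset.Icc 1 n, ∀ t ∈ Set.Icc a b, A i t ∈ Set.Icc (0:ℝ) 1) ∧
  (∀ i ∈ Finset.Icc 1 n, A i (ufpNode a b n i) = 1) ∧
  (∀ i ∈ Finset.Icc 1 n, ∀ t ∈ Set.Icc a b,
    t ∉ Set.Ioo (ufpNode a b n (i-1)) (ufpNode a b n (i+1)) → t ≠ ufpNode a b n i →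
      A i t = 0) ∧
  (∀ i ∈ Finset.Icc 1 n, ContinuousOn (A i) (Set.Icc a b)) ∧
  (∀ i ∈ Finset.Icc 1 n,
    StrictMonoOn (A i) (Set.Icc (ufpNode a b n (i-1)) (ufpNode a b n i)) ∧
    StrictAntiOn (A i) (Set.Icc (ufpNode a b n i) (ufpNode a b n (i+1)))) ∧
  (∀ t ∈ Set.Icc a b, ∑ i ∈ Finset.Icc 1 n, A i t = 1) ∧
  (∀ i, 2 ≤ i → i ≤ n - 1 → ∀ t ∈ Set.Icc 0 ((b - a) / ((n : ℝ) - 1)),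
    A i (ufpNode a b n i - t) = A i (ufpNode a b n i + t)) ∧
  (∀ i, 2 ≤ i → i ≤ n - 2 → ∀ t ∈ Set.Icc (a + (b - a) / ((n : ℝ) - 1)) b,
    A (i+1) t = A i (t - (b - a) / ((n : ℝ) - 1)))

/-- F-transform component `F_i = (∫ f A_i)/(∫ A_i)`. -/
def Fcomp (a b : ℝ) (A : ℕ → ℝ → ℝ) (f : ℝ → ℝ) (i : ℕ) : ℝ :=
  (∫ t in a..b, f t * A i t) / (∫ t in a..b, A i t)

/-- Inverse F-transform `f^F_n(t) = ∑ F_i A_i(t)`. -/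
def invF (a b : ℝ) (n : ℕ) (A : ℕ → ℝ → ℝ) (f : ℝ → ℝ) (t : ℝ) : ℝ :=
  ∑ i ∈ Finset.Icc 1 n, Fcomp a b A f i * A i t

/-- Uniform triangular basic functions `A_i(t) = max(0, 1 - |t - x_i|/h)`. -/
def triA (a b : ℝ) (n i : ℕ) (t : ℝ) : ℝ :=
  max 0 (1 - |t - (a + (b - a) / ((n : ℝ) - 1) * ((i : ℝ) - 1))| / ((b - a) / ((n : ℝ) - 1)))

namespace FTransform

variable {a b c h s t x η : ℝ} {n i : ℕ} {A : ℕ → ℝ → ℝ} {f : ℝ → ℝ}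

lemma abs_mul_le_mul_of_ne_zero {u w : ℝ} (hw : 0 ≤ w) (hu : w ≠ 0 → |u| ≤ η) :
    |u * w| ≤ η * w := by
  rcases eq_or_ne w 0 with rfl | hw₀
  · simp
  · rw [abs_mul, abs_of_nonneg hw]
    exact mul_le_mul_of_nonneg_right (hu hw₀) hw

lemma abs_sub_Fcomp_le (hab : a ≤ b) (hf : ContinuousOn f (Icc a b))
    (hA : ContinuousOn (A i) (Icc a b)) (hA₀ : ∀ t ∈ Icc a b, 0 ≤ A i t)
    (hI : 0 < ∫ t in a..b, A i t)
    (hclose : ∀ t ∈ Icc a b, A i t ≠ 0 → |f x - f t| ≤ η) :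
    |f x - Fcomp a b A f i| ≤ η := by
  rw [← uIcc_of_le hab] at hf hA
  have hAi : IntervalIntegrable (A i) volume a b := hA.intervalIntegrable
  have hfA : IntervalIntegrable (fun t => f t * A i t) volume a b := (hf.mul hA).intervalIntegrable
  have hdev : f x - Fcomp a b A f i =
      (∫ t in a..b, (f x - f t) * A i t) / ∫ t in a..b, A i t := by
    simp_rw [sub_mul]
    rw [intervalIntegral.integral_sub (hAi.const_mul _) hfA,
      intervalIntegral.integral_const_mul, Fcomp]
    field_simp
  have hbound : |∫ t in a..b, (f x - f t) * A i t| ≤ η * ∫ t in a..b, A i t :=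
    calc |∫ t in a..b, (f x - f t) * A i t|
        ≤ ∫ t in a..b, |(f x - f t) * A i t| :=
          intervalIntegral.abs_integral_le_integral_abs hab
      _ ≤ ∫ t in a..b, η * A i t :=
        intervalIntegral.integral_mono_on hab
          ((continuousOn_const.sub hf).mul hA).intervalIntegrable.abs (hAi.const_mul η)
          fun t ht => abs_mul_le_mul_of_ne_zero (hA₀ t ht) (hclose t ht)
      _ = η * ∫ t in a..b, A i t := intervalIntegral.integral_const_mul _ _
  rwa [hdev, abs_div, abs_of_pos hI, div_le_iff₀ hI]

lemma abs_sub_invF_le (hA₀ : ∀ i ∈ Finset.Icc 1 n, 0 ≤ A i x)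
    (hsum : ∑ i ∈ Finset.Icc 1 n, A i x = 1)
    (hclose : ∀ i ∈ Finset.Icc 1 n, A i x ≠ 0 → |f x - Fcomp a b A f i| ≤ η) :
    |f x - invF a b n A f x| ≤ η := by
  have hdev :
      f x - invF a b n A f x = ∑ i ∈ Finset.Icc 1 n, (f x - Fcomp a b A f i) * A i x := by
    simp_rw [invF, sub_mul]
    rw [sum_sub_distrib, ← mul_sum, hsum, mul_one]
  calc |f x - invF a b n A f x|
      ≤ ∑ i ∈ Finset.Icc 1 n, |(f x - Fcomp a b A f i) * A i x| :=
        hdev ▸ abs_sum_le_sum_abs _ _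
    _ ≤ ∑ i ∈ Finset.Icc 1 n, η * A i x :=
      sum_le_sum fun i hi => abs_mul_le_mul_of_ne_zero (hA₀ i hi) (hclose i hi)
    _ = η := by rw [← mul_sum, hsum, mul_one]

def hat (c h t : ℝ) : ℝ := max 0 (1 - |t - c| / h)

lemma hat_nonneg : 0 ≤ hat c h t := le_max_left _ _

lemma hat_le_one (hh : 0 ≤ h) : hat c h t ≤ 1 :=
  max_le zero_le_one (sub_le_self _ (div_nonneg (abs_nonneg _) hh))

@[simp]
lemma hat_self : hat c h c = 1 := by simp [hat]

lemma continuous_hat : Continuous (hat c h) := by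
  unfold hat
  fun_prop

lemma hat_eq_one_sub (hh : 0 < h) (ht : |t - c| ≤ h) : hat c h t = 1 - |t - c| / h :=
  max_eq_right (sub_nonneg.2 ((div_le_one hh).2 ht))

lemma hat_eq_zero (hh : 0 < h) (ht : h ≤ |t - c|) : hat c h t = 0 :=
  max_eq_left (sub_nonpos.2 ((one_le_div hh).2 ht))

lemma abs_sub_lt_of_hat_ne_zero (hh : 0 < h) (ht : hat c h t ≠ 0) : |t - c| < h :=
  lt_of_not_ge fun h' => ht (hat_eq_zero hh h')

lemma dist_lt_of_hat_ne_zero (hh : 0 < h) (hs : hat c h s ≠ 0) (ht : hat c h t ≠ 0) :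
    dist s t < 2 * h := by
  have hs' := abs_sub_lt_of_hat_ne_zero hh hs
  have ht' := abs_sub_lt_of_hat_ne_zero hh ht
  calc dist s t ≤ |s - c| + |c - t| := (Real.dist_eq s t).trans_le (abs_sub_le s c t)
    _ < 2 * h := by rw [abs_sub_comm c t]; linarith

lemma hat_strictMonoOn (hh : 0 < h) : StrictMonoOn (hat c h) (Icc (c - h) c) := by
  intro s ⟨hs₁, hs₂⟩ t ⟨ht₁, ht₂⟩ hst
  rw [hat_eq_one_sub hh, hat_eq_one_sub hh, abs_of_nonpos (by linarith),
    abs_of_nonpos (by linarith : t - c ≤ 0)]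
  · gcongr
  all_goals rw [abs_of_nonpos (by linarith)]; linarith

lemma hat_strictAntiOn (hh : 0 < h) : StrictAntiOn (hat c h) (Icc c (c + h)) := by
  intro s ⟨hs₁, hs₂⟩ t ⟨ht₁, ht₂⟩ hst
  rw [hat_eq_one_sub hh, hat_eq_one_sub hh, abs_of_nonneg (by linarith),
    abs_of_nonneg (by linarith : 0 ≤ s - c)]
  · gcongr
  all_goals rw [abs_of_nonneg (by linarith)]; linarith

lemma hat_center_sub (c h t : ℝ) : hat c h (c - t) = hat c h (c + t) := by
  simp [hat, abs_neg]

lemma hat_add_center (c s h t : ℝ) : hat (c + s) h t = hat c h (t - s) := by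
  simp only [hat, sub_sub, add_comm s]

lemma hat_add_hat_add (hh : 0 < h) (ht : t ∈ Icc c (c + h)) :
    hat c h t + hat (c + h) h t = 1 := by
  obtain ⟨ht₁, ht₂⟩ := ht
  have e₁ : |t - c| = t - c := abs_of_nonneg (by linarith)
  have e₂ : |t - (c + h)| = c + h - t := by rw [abs_of_nonpos (by linarith)]; ring
  rw [hat_eq_one_sub hh (by linarith), hat_eq_one_sub hh (by linarith), e₁, e₂]
  field_simp
  ring

/-- The tent at `c - h` makes the statement inductive: the step shifts `c` to `c + h`. -/
lemma hat_sub_add_sum_hat (hh : 0 < h) (m : ℕ) (ht : t ∈ Icc (c - h) (c + h * m)) :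
    hat (c - h) h t + ∑ j ∈ range (m + 1), hat (c + h * j) h t = 1 := by
  induction m generalizing c with
  | zero =>
    simpa using hat_add_hat_add hh (c := c - h) (by simpa using ht)
  | succ m ih =>
    rw [sum_range_succ']
    rcases le_total c t with hct | htc
    · have hzero : hat (c - h) h t = 0 :=
        hat_eq_zero hh (by rw [abs_of_nonneg (by linarith)]; linarith)
      have hshift := ih (c := c + h) (by
        obtain ⟨_, ht₂⟩ := ht
        push_cast at ht₂
        constructor <;> linarith)
      simp only [add_sub_cancel_right] at hshift
      have hgrid (j : ℕ) : c + h * ↑(j + 1) = c + h + h * j := by push_cast; ring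
      simp only [hgrid, Nat.cast_zero, mul_zero, add_zero, hzero, ← hshift]
      ring
    · have hzero : ∀ j ∈ range (m + 1), hat (c + h * ↑(j + 1)) h t = 0 := by
        intro j _
        apply hat_eq_zero hh
        rw [abs_of_nonpos (by push_cast; nlinarith [(j.cast_nonneg : (0 : ℝ) ≤ j)])]
        push_cast
        nlinarith [(j.cast_nonneg : (0 : ℝ) ≤ j)]
      rw [sum_eq_zero hzero, zero_add, Nat.cast_zero, mul_zero, add_zero]
      simpa using hat_add_hat_add hh (c := c - h) (by rw [sub_add_cancel]; exact ⟨ht.1, htc⟩)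

lemma integral_hat_pos (hab : a < b) (hc : c ∈ Icc a b) : 0 < ∫ t in a..b, hat c h t :=
  intervalIntegral.integral_pos hab continuous_hat.continuousOn (fun _ _ => hat_nonneg)
    ⟨c, hc, by simp⟩

def ufpStep (a b : ℝ) (n : ℕ) : ℝ := (b - a) / ((n : ℝ) - 1)

/-- `ufpNode` without its boundary conventions at `i = 0` and `i = n + 1`. -/
def ufpGrid (a b : ℝ) (n i : ℕ) : ℝ := a + ufpStep a b n * ((i : ℝ) - 1)

lemma triA_eq_hat (a b : ℝ) (n i : ℕ) : triA a b n i = hat (ufpGrid a b n i) (ufpStep a b n) :=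
  rfl

lemma ufpStep_pos (hab : a < b) (hn : 2 ≤ n) : 0 < ufpStep a b n := by
  have : (2 : ℝ) ≤ n := by exact_mod_cast hn
  exact div_pos (by linarith) (by linarith)

lemma exists_ufpStep_lt (a b : ℝ) {δ : ℝ} (hδ : 0 < δ) :
    ∃ n, 2 ≤ n ∧ ufpStep a b n < δ := by
  obtain ⟨N, hN⟩ := exists_nat_gt ((b - a) / δ)
  refine ⟨N + 2, by omega, ?_⟩
  rw [ufpStep, div_lt_iff₀ (by push_cast; linarith)]
  rw [div_lt_iff₀ hδ] at hN
  push_cast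
  nlinarith

@[simp]
lemma ufpGrid_one : ufpGrid a b n 1 = a := by simp [ufpGrid]

lemma ufpGrid_last (hn : n ≠ 1) : ufpGrid a b n n = b := by
  have : (n : ℝ) - 1 ≠ 0 := sub_ne_zero.2 (by exact_mod_cast hn)
  rw [ufpGrid, ufpStep, div_mul_cancel₀ _ this]
  ring

lemma ufpGrid_succ (a b : ℝ) (n i : ℕ) :
    ufpGrid a b n (i + 1) = ufpGrid a b n i + ufpStep a b n := by
  simp only [ufpGrid]
  push_cast
  ring

lemma ufpGrid_mono (hh : 0 ≤ ufpStep a b n) : Monotone (ufpGrid a b n) := by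
  intro i j hij
  unfold ufpGrid
  gcongr

lemma ufpGrid_mem_Icc (hh : 0 ≤ ufpStep a b n) (hn : n ≠ 1) (hi : 1 ≤ i) (hin : i ≤ n) :
    ufpGrid a b n i ∈ Icc a b := by
  constructor
  · simpa using ufpGrid_mono hh hi
  · simpa [ufpGrid_last hn] using ufpGrid_mono hh hin

lemma ufpGrid_eq_or_add_le (hh : 0 ≤ ufpStep a b n) (hi : 1 ≤ i) :
    ufpGrid a b n i = a ∨ a + ufpStep a b n ≤ ufpGrid a b n i := by
  rcases hi.eq_or_lt with rfl | hi
  · exact Or.inl ufpGrid_one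
  · have h2 : ufpGrid a b n (1 + 1) ≤ ufpGrid a b n i := ufpGrid_mono hh hi
    rw [ufpGrid_succ, ufpGrid_one] at h2
    exact Or.inr h2

lemma ufpGrid_eq_or_le_sub (hh : 0 ≤ ufpStep a b n) (hn : n ≠ 1) (hin : i ≤ n) :
    ufpGrid a b n i = b ∨ ufpGrid a b n i + ufpStep a b n ≤ b := by
  rcases hin.eq_or_lt with rfl | hin
  · exact Or.inl (ufpGrid_last hn)
  · simpa [← ufpGrid_succ, ufpGrid_last hn] using Or.inr (ufpGrid_mono hh hin)

lemma ufpNode_eq_ufpGrid (hi : 1 ≤ i) (hin : i ≤ n) : ufpNode a b n i = ufpGrid a b n i := by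
  rw [ufpNode, if_neg (by omega), if_neg (by omega), ufpGrid, ufpStep]

lemma ufpNode_pred (hh : 0 ≤ ufpStep a b n) (hi : 1 ≤ i) (hin : i ≤ n) :
    ufpNode a b n (i - 1) = max a (ufpGrid a b n i - ufpStep a b n) := by
  rcases hi.eq_or_lt with rfl | hi
  · simp [ufpNode, hh]
  · obtain ⟨j, rfl⟩ : ∃ j, i = j + 1 := ⟨i - 1, by omega⟩
    rw [Nat.add_sub_cancel, ufpNode_eq_ufpGrid (by omega) (by omega), ufpGrid_succ,
      add_sub_cancel_right, max_eq_right (by simpa using ufpGrid_mono hh (by omega : 1 ≤ j))]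

lemma ufpNode_succ (hh : 0 ≤ ufpStep a b n) (hn : n ≠ 1) (hi : 1 ≤ i) (hin : i ≤ n) :
    ufpNode a b n (i + 1) = min b (ufpGrid a b n i + ufpStep a b n) := by
  rcases hin.eq_or_lt with rfl | hin
  · simp [ufpNode, ufpGrid_last hn, hh]
  · rw [ufpNode_eq_ufpGrid (by omega) hin, ← ufpGrid_succ,
      min_eq_right (by simpa [ufpGrid_last hn] using ufpGrid_mono hh hin)]

lemma sum_triA_eq_one (hab : a < b) (hn : 2 ≤ n) (ht : t ∈ Icc a b) :
    ∑ i ∈ Finset.Icc 1 n, triA a b n i t = 1 := by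
  have hh := ufpStep_pos hab hn
  obtain ⟨m, rfl⟩ : ∃ m, n = m + 1 := ⟨n - 1, by omega⟩
  have hb : a + ufpStep a b (m + 1) * m = b := by
    simpa [ufpGrid] using ufpGrid_last (a := a) (b := b) (n := m + 1) (by omega)
  have hzero : hat (a - ufpStep a b (m + 1)) (ufpStep a b (m + 1)) t = 0 :=
    hat_eq_zero hh (by rw [abs_of_nonneg (by linarith [ht.1])]; linarith [ht.1])
  have hsum := hat_sub_add_sum_hat hh m (c := a) ⟨by linarith [ht.1], hb ▸ ht.2⟩
  rw [hzero, zero_add] at hsum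
  rw [← Finset.Ico_add_one_right_eq_Icc, ← zero_add 1, ← Finset.sum_Ico_add',
    ← range_eq_Ico, ← hsum]
  simp [triA_eq_hat, ufpGrid]

lemma triA_eq_zero_of_notMem_Ioo (hab : a < b) (hn : 2 ≤ n) (hi : 1 ≤ i) (hin : i ≤ n)
    (ht : t ∈ Icc a b) (hnot : t ∉ Ioo (ufpNode a b n (i - 1)) (ufpNode a b n (i + 1)))
    (hne : t ≠ ufpNode a b n i) : triA a b n i t = 0 := by
  have hh := ufpStep_pos hab hn
  have hn1 : n ≠ 1 := by omega
  rw [ufpNode_pred hh.le hi hin, ufpNode_succ hh.le hn1 hi hin] at hnot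
  rw [ufpNode_eq_ufpGrid hi hin] at hne
  rw [triA_eq_hat]
  refine hat_eq_zero hh (le_of_not_gt fun hlt => hnot ?_)
  rw [abs_sub_lt_iff] at hlt
  refine ⟨max_lt ?_ (by linarith), lt_min ?_ (by linarith)⟩
  · rcases ufpGrid_eq_or_add_le hh.le hi with hc | hc
    · exact ht.1.lt_of_ne fun hta => hne (hta.symm.trans hc.symm)
    · linarith
  · rcases ufpGrid_eq_or_le_sub hh.le hn1 hin with hc | hc
    · exact ht.2.lt_of_ne fun htb => hne (htb.trans hc.symm)
    · linarith

theorem isUFP_triA (hab : a < b) (hn : 2 ≤ n) : IsUFP a b n (triA a b n) := by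
  have hh := ufpStep_pos hab hn
  refine ⟨hn, hab, fun i _ t _ => ⟨hat_nonneg, hat_le_one hh.le⟩, fun i hi => ?_,
    fun i hi t ht => ?_, fun i _ => continuous_hat.continuousOn, fun i hi => ⟨?_, ?_⟩,
    fun t ht => sum_triA_eq_one hab hn ht, fun i hi₂ hin t _ => ?_, fun i _ _ t _ => ?_⟩
  · rw [Finset.mem_Icc] at hi
    rw [ufpNode_eq_ufpGrid hi.1 hi.2]
    exact hat_self
  · rw [Finset.mem_Icc] at hi
    exact triA_eq_zero_of_notMem_Ioo hab hn hi.1 hi.2 ht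
  · rw [Finset.mem_Icc] at hi
    rw [triA_eq_hat, ufpNode_pred hh.le hi.1 hi.2, ufpNode_eq_ufpGrid hi.1 hi.2]
    exact (hat_strictMonoOn hh).mono (Icc_subset_Icc_left (le_max_right _ _))
  · rw [Finset.mem_Icc] at hi
    rw [triA_eq_hat, ufpNode_succ hh.le (by omega) hi.1 hi.2, ufpNode_eq_ufpGrid hi.1 hi.2]
    exact (hat_strictAntiOn hh).mono (Icc_subset_Icc_right (min_le_right _ _))
  · rw [ufpNode_eq_ufpGrid (by omega) (by omega)]
    exact hat_center_sub _ _ _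
  · rw [triA_eq_hat, triA_eq_hat, ufpGrid_succ, hat_add_center]
    rfl

end FTransform

open FTransform

/-- approximation property of the inverse F-transform: for every
continuous `f` and `ε > 0` there is a uniform fuzzy partition whose inverse
F-transform is uniformly `ε`-close to `f`. -/
theorem stmt3 (a b : ℝ) (hab : a < b) (f : ℝ → ℝ)
    (hf : ContinuousOn f (Set.Icc a b)) (ε : ℝ) (hε : 0 < ε) :
    ∃ (n : ℕ) (A : ℕ → ℝ → ℝ), IsUFP a b n A ∧
      ∀ x ∈ Set.Icc a b, |f x - invF a b n A f x| < ε := by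
  obtain ⟨δ, hδ, hfδ⟩ := Metric.uniformContinuousOn_iff.1
    (isCompact_Icc.uniformContinuousOn_of_continuous hf) (ε / 2) (half_pos hε)
  obtain ⟨n, hn, hstep⟩ := exists_ufpStep_lt a b (half_pos hδ)
  have hh := ufpStep_pos hab hn
  refine ⟨n, triA a b n, isUFP_triA hab hn, fun x hx => ?_⟩
  have hlocal : ∀ i, ∀ t ∈ Icc a b, triA a b n i x ≠ 0 → triA a b n i t ≠ 0 →
      |f x - f t| ≤ ε / 2 := fun i t ht hxi hti =>
    (hfδ x hx t ht ((dist_lt_of_hat_ne_zero hh hxi hti).trans (by linarith))).le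
  calc |f x - invF a b n (triA a b n) f x| ≤ ε / 2 :=
        abs_sub_invF_le (fun _ _ => hat_nonneg) (sum_triA_eq_one hab hn hx) fun i hi hxi =>
          abs_sub_Fcomp_le hab.le hf continuous_hat.continuousOn (fun _ _ => hat_nonneg)
            (integral_hat_pos hab (ufpGrid_mem_Icc hh.le (by omega) (Finset.mem_Icc.1 hi).1
              (Finset.mem_Icc.1 hi).2)) fun t ht hti => hlocal i t ht hxi hti
    _ < ε := half_lt_self hε

end
end

section
/- Let $u$ be continuous on $D=[a,b]\times[0,T]$ and for each $n,m$ let $u^F_{n,m}$ be its inverse F-transform with respect to uniform triangular fuzzy partitions with $n$ and $m$ nodes. Then $u^F_{n,m}\to u$ uniformly on $D$ as $n,m\to\infty$. -/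
/-!
The inverse F-transform is a convex combination: the products `A_i(x) B_j(t)` are nonnegative and
sum to one on `D`, and each component `F_ij` is a weighted average of `u` over the support of
`A_i B_j`, a rectangle of sides `2 h_x`, `2 h_t`. Once both `h_x` and `h_t` are below half a
modulus of uniform continuity of `u` for `ε / 2`, every `F_ij` with `A_i(x) B_j(t) ≠ 0` lies
within `ε / 2` of `u(x, t)`, and hence so does their convex combination.
-/

open MeasureTheory intervalIntegral Real Set Finset

noncomputable section

open Filter Topology

theorem abs_sub_sum_mul_le {ι : Type*} (s : Finset ι) {F φ : ι → ℝ} {c ε : ℝ}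
    (hφ_nonneg : ∀ i ∈ s, 0 ≤ φ i) (hφ_sum : ∑ i ∈ s, φ i = 1)
    (hclose : ∀ i ∈ s, φ i ≠ 0 → |c - F i| ≤ ε) :
    |c - ∑ i ∈ s, F i * φ i| ≤ ε := by
  have hdiff : c - ∑ i ∈ s, F i * φ i = ∑ i ∈ s, (c - F i) * φ i := by
    simp_rw [sub_mul, Finset.sum_sub_distrib, ← Finset.mul_sum, hφ_sum, mul_one]
  calc |c - ∑ i ∈ s, F i * φ i| ≤ ∑ i ∈ s, |(c - F i) * φ i| :=
        hdiff ▸ Finset.abs_sum_le_sum_abs _ _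
    _ ≤ ∑ i ∈ s, ε * φ i := by
        refine Finset.sum_le_sum fun i hi => ?_
        rw [abs_mul, abs_of_nonneg (hφ_nonneg i hi)]
        rcases eq_or_ne (φ i) 0 with h0 | h0
        · simp [h0]
        · exact mul_le_mul_of_nonneg_right (hclose i hi h0) (hφ_nonneg i hi)
    _ = ε := by rw [← Finset.mul_sum, hφ_sum, mul_one]

theorem abs_sub_sum_sum_mul_mul_le {ι κ : Type*} (s : Finset ι) (t : Finset κ)
    {F : ι → κ → ℝ} {φ : ι → ℝ} {ψ : κ → ℝ} {c ε : ℝ}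
    (hφ_nonneg : ∀ i ∈ s, 0 ≤ φ i) (hφ_sum : ∑ i ∈ s, φ i = 1)
    (hψ_nonneg : ∀ j ∈ t, 0 ≤ ψ j) (hψ_sum : ∑ j ∈ t, ψ j = 1)
    (hclose : ∀ i ∈ s, ∀ j ∈ t, φ i ≠ 0 → ψ j ≠ 0 → |c - F i j| ≤ ε) :
    |c - ∑ i ∈ s, ∑ j ∈ t, F i j * φ i * ψ j| ≤ ε := by
  simp_rw [mul_assoc]
  rw [← Finset.sum_product' (f := fun i j => F i j * (φ i * ψ j))]
  refine abs_sub_sum_mul_le (s ×ˢ t) (fun p hp => ?_) ?_ (fun p hp hp0 => ?_)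
  · rw [Finset.mem_product] at hp
    exact mul_nonneg (hφ_nonneg _ hp.1) (hψ_nonneg _ hp.2)
  · rw [Finset.sum_product, ← Finset.sum_mul_sum, hφ_sum, hψ_sum, mul_one]
  · rw [Finset.mem_product] at hp
    exact hclose _ hp.1 _ hp.2 (left_ne_zero_of_mul hp0) (right_ne_zero_of_mul hp0)

theorem abs_sub_integral_mul_div_integral_le {α : Type*} [MeasurableSpace α] {μ : Measure α}
    {f w : α → ℝ} {c ε : ℝ}
    (hfw : Integrable (fun x => f x * w x) μ) (hw : Integrable w μ)
    (hw_nonneg : ∀ᵐ x ∂μ, 0 ≤ w x) (hw_pos : 0 < ∫ x, w x ∂μ)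
    (hclose : ∀ᵐ x ∂μ, w x ≠ 0 → |c - f x| ≤ ε) :
    |c - (∫ x, f x * w x ∂μ) / ∫ x, w x ∂μ| ≤ ε := by
  have hdiff : c * (∫ x, w x ∂μ) - ∫ x, f x * w x ∂μ = ∫ x, (c - f x) * w x ∂μ := by
    simp_rw [sub_mul]
    rw [integral_sub (hw.const_mul c) hfw, MeasureTheory.integral_const_mul]
  have hbound : ‖∫ x, (c - f x) * w x ∂μ‖ ≤ ∫ x, ε * w x ∂μ := by
    refine norm_integral_le_of_norm_le (hw.const_mul ε) ?_
    filter_upwards [hw_nonneg, hclose] with x hx0 hx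
    rw [Real.norm_eq_abs, abs_mul, abs_of_nonneg hx0]
    rcases eq_or_ne (w x) 0 with h0 | h0
    · simp [h0]
    · exact mul_le_mul_of_nonneg_right (hx h0) hx0
  rw [MeasureTheory.integral_const_mul, ← hdiff, Real.norm_eq_abs] at hbound
  rwa [sub_div' hw_pos.ne', abs_div, abs_of_pos hw_pos, div_le_iff₀ hw_pos]

theorem intervalIntegral_intervalIntegral_eq_setIntegral_prod {a b c d : ℝ} (hab : a ≤ b)
    (hcd : c ≤ d) {f : ℝ × ℝ → ℝ} (hf : IntegrableOn f (Icc a b ×ˢ Icc c d)) :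
    ∫ s in c..d, ∫ y in a..b, f (y, s) = ∫ p in Icc a b ×ˢ Icc c d, f p := by
  rw [Measure.volume_eq_prod, ← setIntegral_prod_swap,
    setIntegral_prod (fun z => f z.swap) hf.swap, intervalIntegral.integral_of_le hcd,
    ← integral_Icc_eq_integral_Ioc]
  refine setIntegral_congr_fun measurableSet_Icc fun s _ => ?_
  rw [intervalIntegral.integral_of_le hab, ← integral_Icc_eq_integral_Ioc]
  rfl

theorem abs_sub_integral_integral_mul_mul_div_le {a b c d : ℝ} (hab : a ≤ b) (hcd : c ≤ d)
    {u : ℝ → ℝ → ℝ} (hu : ContinuousOn (fun p : ℝ × ℝ => u p.1 p.2) (Icc a b ×ˢ Icc c d))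
    {A B : ℝ → ℝ} (hA : Continuous A) (hB : Continuous B) (hA_nonneg : ∀ y, 0 ≤ A y)
    (hB_nonneg : ∀ s, 0 ≤ B s) (hA_pos : 0 < ∫ y in a..b, A y) (hB_pos : 0 < ∫ s in c..d, B s)
    {z ε : ℝ} (hclose : ∀ y ∈ Icc a b, ∀ s ∈ Icc c d, A y ≠ 0 → B s ≠ 0 → |z - u y s| ≤ ε) :
    |z - (∫ s in c..d, ∫ y in a..b, u y s * A y * B s) /
      ∫ s in c..d, ∫ y in a..b, A y * B s| ≤ ε := by
  have hR : IsCompact (Icc a b ×ˢ Icc c d) := isCompact_Icc.prod isCompact_Icc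
  have hw : Continuous fun p : ℝ × ℝ => A p.1 * B p.2 := by fun_prop
  have huw := hu.mul hw.continuousOn
  have hden_pos : 0 < ∫ s in c..d, ∫ y in a..b, A y * B s := by
    simp_rw [intervalIntegral.integral_mul_const, intervalIntegral.integral_const_mul]
    exact mul_pos hA_pos hB_pos
  have hnum : ∫ s in c..d, ∫ y in a..b, u y s * A y * B s =
      ∫ p in Icc a b ×ˢ Icc c d, u p.1 p.2 * (A p.1 * B p.2) := by
    simp_rw [mul_assoc]
    exact intervalIntegral_intervalIntegral_eq_setIntegral_prod hab hcd
      (huw.integrableOn_compact hR)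
  have hden : ∫ s in c..d, ∫ y in a..b, A y * B s =
      ∫ p in Icc a b ×ˢ Icc c d, A p.1 * B p.2 :=
    intervalIntegral_intervalIntegral_eq_setIntegral_prod hab hcd
      (hw.continuousOn.integrableOn_compact hR)
  rw [hden] at hden_pos
  rw [hnum, hden]
  refine abs_sub_integral_mul_div_integral_le (huw.integrableOn_compact hR)
    (hw.continuousOn.integrableOn_compact hR)
    (ae_of_all _ fun p => mul_nonneg (hA_nonneg _) (hB_nonneg _)) hden_pos ?_
  refine ae_restrict_of_forall_mem (measurableSet_Icc.prod measurableSet_Icc) fun p hp hp0 => ?_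
  exact hclose _ hp.1 _ hp.2 (left_ne_zero_of_mul hp0) (right_ne_zero_of_mul hp0)

theorem tendsto_div_natCast_sub_one (L : ℝ) :
    Tendsto (fun n : ℕ => L / ((n : ℝ) - 1)) atTop (𝓝 0) :=
  tendsto_const_nhds.div_atTop
    (tendsto_atTop_add_const_right _ (-1) tendsto_natCast_atTop_atTop)

/-- The closed form on all of `[0, ∞)`, not just the value `1` on `[0, N]`, is what makes the
induction go through. -/
theorem sum_range_max_zero_one_sub_abs (N : ℕ) {s : ℝ} (hs : 0 ≤ s) :
    ∑ k ∈ Finset.range (N + 1), max 0 (1 - |s - k|) = min 1 (max 0 (N + 1 - s)) := by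
  induction N with
  | zero => simp [abs_of_nonneg hs, hs]
  | succ N ih =>
    rw [Finset.sum_range_succ, ih]
    push_cast
    rcases le_total s (N + 1) with h | h
    · rw [abs_of_nonpos (by linarith)]
      rcases le_total s N with h' | h' <;> simp only [max_def, min_def] <;> split_ifs <;> linarith
    · rw [abs_of_nonneg (by linarith)]
      simp only [max_def, min_def]; split_ifs <;> linarith

theorem triA_nonneg (a b : ℝ) (n i : ℕ) (t : ℝ) : 0 ≤ triA a b n i t := le_max_left _ _

theorem continuous_triA (a b : ℝ) (n i : ℕ) : Continuous (triA a b n i) := by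
  unfold triA; fun_prop

section TriangularPartition

variable {a b : ℝ} {n : ℕ}

theorem sub_div_natCast_sub_one_pos (hab : a < b) (hn : 2 ≤ n) :
    0 < (b - a) / ((n : ℝ) - 1) := by
  have : (2 : ℝ) ≤ n := by exact_mod_cast hn
  apply div_pos <;> linarith

theorem triA_eq (hab : a < b) (hn : 2 ≤ n) (i : ℕ) (t : ℝ) :
    triA a b n i t = max 0 (1 - |(t - a) / ((b - a) / ((n : ℝ) - 1)) - ((i : ℝ) - 1)|) := by
  unfold triA
  set h := (b - a) / ((n : ℝ) - 1)
  have hh : 0 < h := sub_div_natCast_sub_one_pos hab hn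
  have e : t - (a + h * ((i : ℝ) - 1)) = h * ((t - a) / h - ((i : ℝ) - 1)) := by
    field_simp
    ring
  rw [e, abs_mul, abs_of_pos hh, mul_div_cancel_left₀ _ hh.ne']

theorem abs_sub_lt_of_triA_ne_zero (hab : a < b) (hn : 2 ≤ n) {i : ℕ} {x y : ℝ}
    (hx : triA a b n i x ≠ 0) (hy : triA a b n i y ≠ 0) :
    |x - y| < 2 * ((b - a) / ((n : ℝ) - 1)) := by
  have hh := sub_div_natCast_sub_one_pos hab hn
  have near : ∀ t, triA a b n i t ≠ 0 →
      |(t - a) / ((b - a) / ((n : ℝ) - 1)) - ((i : ℝ) - 1)| < 1 := by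
    intro t ht
    rw [triA_eq hab hn] at ht
    by_contra! h
    exact ht (max_eq_left (by linarith))
  have := (abs_sub _ _).trans_lt (add_lt_add (near x hx) (near y hy))
  rw [sub_sub_sub_cancel_right, ← sub_div, sub_sub_sub_cancel_right, abs_div, abs_of_pos hh,
    div_lt_iff₀ hh] at this
  linarith

theorem sum_triA_eq_one (hab : a < b) (hn : 2 ≤ n) {x : ℝ} (hx : x ∈ Icc a b) :
    ∑ i ∈ Finset.Icc 1 n, triA a b n i x = 1 := by
  obtain ⟨N, rfl⟩ : ∃ N, n = N + 1 := ⟨n - 1, by omega⟩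
  have hN : ((N + 1 : ℕ) : ℝ) - 1 = N := by push_cast; ring
  have hh := sub_div_natCast_sub_one_pos hab hn
  rw [hN] at hh
  set s := (x - a) / ((b - a) / N)
  have hs0 : 0 ≤ s := div_nonneg (by linarith [hx.1]) hh.le
  have hsN : s ≤ N := by
    have hN0 : (N : ℝ) ≠ 0 := by
      have : (1 : ℝ) ≤ N := by exact_mod_cast (by omega : 1 ≤ N)
      positivity
    rw [div_le_iff₀ hh, mul_div_cancel₀ _ hN0]
    linarith [hx.2]
  rw [← Finset.Ico_add_one_right_eq_Icc, Finset.sum_Ico_eq_sum_range, Nat.add_sub_cancel]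
  simp_rw [triA_eq hab hn, hN]
  push_cast
  simp_rw [add_sub_cancel_left]
  rw [sum_range_max_zero_one_sub_abs N hs0, max_eq_right (by linarith),
    min_eq_left (by linarith)]

theorem integral_triA_pos (hab : a < b) (hn : 2 ≤ n) {i : ℕ} (hi : i ∈ Finset.Icc 1 n) :
    0 < ∫ y in a..b, triA a b n i y := by
  rw [Finset.mem_Icc] at hi
  have hi1 : (1 : ℝ) ≤ i := by exact_mod_cast hi.1
  have hin : (i : ℝ) ≤ n := by exact_mod_cast hi.2
  have hn1 : (n : ℝ) - 1 ≠ 0 := by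
    have : (2 : ℝ) ≤ n := by exact_mod_cast hn
    linarith
  have node_mem : a + (b - a) / ((n : ℝ) - 1) * ((i : ℝ) - 1) ∈ Icc a b := by
    have hh := sub_div_natCast_sub_one_pos hab hn
    constructor
    · nlinarith
    · have : (b - a) / ((n : ℝ) - 1) * ((n : ℝ) - 1) = b - a := div_mul_cancel₀ _ hn1
      nlinarith
  refine intervalIntegral.integral_pos hab (continuous_triA a b n i).continuousOn
    (fun y _ => triA_nonneg a b n i y) ⟨_, node_mem, ?_⟩
  simp [triA]

end TriangularPartition

/-- for continuous `u`, the two-dimensional inverse F-transforms with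
respect to uniform triangular partitions converge uniformly to `u` as `n, m → ∞`. -/
theorem stmt19 (a b T : ℝ) (hab : a < b) (hT : 0 < T)
    (u : ℝ → ℝ → ℝ)
    (hu : ContinuousOn (fun p : ℝ × ℝ => u p.1 p.2) (Set.Icc a b ×ˢ Set.Icc 0 T)) :
    ∀ ε > 0, ∃ N : ℕ, 2 ≤ N ∧ ∀ n m : ℕ, N ≤ n → N ≤ m →
      ∀ x ∈ Set.Icc a b, ∀ t ∈ Set.Icc (0:ℝ) T,
        |u x t - ∑ i ∈ Finset.Icc 1 n, ∑ j ∈ Finset.Icc 1 m,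
          ((∫ s in (0:ℝ)..T, ∫ y in a..b, u y s * triA a b n i y * triA 0 T m j s) /
            (∫ s in (0:ℝ)..T, ∫ y in a..b, triA a b n i y * triA 0 T m j s)) *
          triA a b n i x * triA 0 T m j t| < ε := by
  intro ε hε
  obtain ⟨δ, hδ, hUC⟩ := Metric.uniformContinuousOn_iff.1
    ((isCompact_Icc.prod isCompact_Icc).uniformContinuousOn_of_continuous hu) (ε / 2) (half_pos hε)
  have fine_mesh : ∀ᶠ n : ℕ in atTop,
      (b - a) / ((n : ℝ) - 1) < δ / 2 ∧ (T - 0) / ((n : ℝ) - 1) < δ / 2 :=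
    ((tendsto_div_natCast_sub_one _).eventually (gt_mem_nhds (half_pos hδ))).and
      ((tendsto_div_natCast_sub_one _).eventually (gt_mem_nhds (half_pos hδ)))
  obtain ⟨N, hN⟩ := eventually_atTop.1 fine_mesh
  refine ⟨max N 2, le_max_right _ _, fun n m hn hm x hx t ht => ?_⟩
  have hn2 : 2 ≤ n := le_of_max_le_right hn
  have hm2 : 2 ≤ m := le_of_max_le_right hm
  have hstep_n := (hN n (le_of_max_le_left hn)).1
  have hstep_m := (hN m (le_of_max_le_left hm)).2
  refine (abs_sub_sum_sum_mul_mul_le _ _ (fun i _ => triA_nonneg a b n i x)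
    (sum_triA_eq_one hab hn2 hx) (fun j _ => triA_nonneg 0 T m j t) (sum_triA_eq_one hT hm2 ht)
    fun i hi j hj hx0 ht0 => ?_).trans_lt (half_lt_self hε)
  refine abs_sub_integral_integral_mul_mul_div_le hab.le hT.le hu (continuous_triA a b n i)
    (continuous_triA 0 T m j) (triA_nonneg a b n i) (triA_nonneg 0 T m j)
    (integral_triA_pos hab hn2 hi) (integral_triA_pos hT hm2 hj) fun y hy s hs hy0 hs0 => ?_
  have hyx := abs_sub_lt_of_triA_ne_zero hab hn2 hx0 hy0
  have hst := abs_sub_lt_of_triA_ne_zero hT hm2 ht0 hs0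
  have := hUC (x, t) ⟨hx, ht⟩ (y, s) ⟨hy, hs⟩ <| by
    rw [Prod.dist_eq, Real.dist_eq, Real.dist_eq]
    exact max_lt (by linarith) (by linarith)
  rw [Real.dist_eq] at this
  exact this.le

end
end
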